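/- Assume the statement: for every continuous f : I^n → ℝ^{n-1} there exist p ∈ ℝ^{n-1} and a compact connected set S ⊆ f^{-1}({p}) meeting two opposite faces of I^n. Then there is no retraction r : I^n → ∂I^n (continuous map restricting to the identity on ∂I^n), and consequently every continuous map I^n → I^n has a fixed point. -/

import Mathlib

/-!
Transport everything to the Euclidean ball by a homeomorphism `e` of `Iⁿ` onto the closed unit
ball that carries `∂Iⁿ` onto the unit sphere. For a continuous `φ : Iⁿ → Sⁿ⁻¹`, apply the
hypothesis to the first `n - 1` coordinates of `φ`: the continuum `S` it provides is mapped into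
the intersection of the sphere with a line, which has at most two points, so the connected set
`φ '' S` is a single point and `φ` identifies two points of opposite faces. A retraction `r` of
`Iⁿ` onto `∂Iⁿ` would make `e ∘ r` such a map injective on `∂Iⁿ`. A fixed-point-free self-map
of `Iⁿ` gives a retraction, by pushing each point `y` of the ball along the ray from `G y`
through `y` until it meets the sphere, where `G` is the conjugated map on the ball.
-/

open Set Metric
open scoped InnerProductSpace

section SphereExit

variable {F : Type*} [NormedAddCommGroup F] [InnerProductSpace ℝ F]

/-- The nonnegative root `t` of `‖x + t • d‖ = 1` when `‖x‖ ≤ 1` and `d ≠ 0`. -/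
noncomputable def sphereExitTime (x d : F) : ℝ :=
  (-⟪x, d⟫_ℝ + √(⟪x, d⟫_ℝ ^ 2 + ‖d‖ ^ 2 * (1 - ‖x‖ ^ 2))) / ‖d‖ ^ 2

lemma norm_add_sphereExitTime_smul {x d : F} (hx : ‖x‖ ≤ 1) (hd : d ≠ 0) :
    ‖x + sphereExitTime x d • d‖ = 1 := by
  have hd2 : 0 < ‖d‖ ^ 2 := by positivity
  have hdisc : 0 ≤ ⟪x, d⟫_ℝ ^ 2 + ‖d‖ ^ 2 * (1 - ‖x‖ ^ 2) := by
    have : ‖x‖ ^ 2 ≤ 1 := pow_le_one₀ (norm_nonneg x) hx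
    nlinarith [sq_nonneg ⟪x, d⟫_ℝ]
  have h : ‖x + sphereExitTime x d • d‖ ^ 2 = 1 := by
    rw [norm_add_sq_real, inner_smul_right, norm_smul, mul_pow, Real.norm_eq_abs, sq_abs,
      sphereExitTime]
    field_simp
    nlinarith [Real.sq_sqrt hdisc]
  nlinarith [norm_nonneg (x + sphereExitTime x d • d)]

lemma sphereExitTime_eq_zero {x d : F} (hx : ‖x‖ = 1) (hxd : 0 ≤ ⟪x, d⟫_ℝ) :
    sphereExitTime x d = 0 := by
  simp [sphereExitTime, hx, Real.sqrt_sq hxd]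

lemma ContinuousOn.sphereExitTime {α : Type*} [TopologicalSpace α] {X D : α → F} {s : Set α}
    (hX : ContinuousOn X s) (hD : ContinuousOn D s) (hD0 : ∀ a ∈ s, D a ≠ 0) :
    ContinuousOn (fun a ↦ sphereExitTime (X a) (D a)) s := by
  unfold _root_.sphereExitTime
  exact ContinuousOn.div (by fun_prop) (by fun_prop) fun a ha ↦ by simpa using hD0 a ha

lemma exists_retraction_closedBall_of_forall_ne {G : F → F}
    (hG : ContinuousOn G (closedBall 0 1)) (hGB : MapsTo G (closedBall 0 1) (closedBall 0 1))
    (hfix : ∀ y ∈ closedBall (0 : F) 1, G y ≠ y) :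
    ∃ ρ : F → F, ContinuousOn ρ (closedBall 0 1) ∧ MapsTo ρ (closedBall 0 1) (sphere 0 1) ∧
      EqOn ρ id (sphere 0 1) := by
  have hd : ∀ y ∈ closedBall (0 : F) 1, y - G y ≠ 0 := fun y hy ↦ sub_ne_zero.2 (hfix y hy).symm
  refine ⟨fun y ↦ y + sphereExitTime y (y - G y) • (y - G y), ?_, fun y hy ↦ ?_, fun y hy ↦ ?_⟩
  · have hD : ContinuousOn (fun y ↦ y - G y) (closedBall 0 1) := continuousOn_id.sub hG
    exact continuousOn_id.add ((continuousOn_id.sphereExitTime hD hd).smul hD)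
  · exact mem_sphere_zero_iff_norm.2
      (norm_add_sphereExitTime_smul (mem_closedBall_zero_iff.1 hy) (hd y hy))
  · have hy1 : ‖y‖ = 1 := mem_sphere_zero_iff_norm.1 hy
    have hGy : ‖G y‖ ≤ 1 := mem_closedBall_zero_iff.1 (hGB (sphere_subset_closedBall hy))
    have hinner : 0 ≤ ⟪y, y - G y⟫_ℝ := by
      rw [inner_sub_right, real_inner_self_eq_norm_sq, hy1]
      nlinarith [real_inner_le_norm y (G y)]
    simp [sphereExitTime_eq_zero hy1 hinner]

end SphereExit

lemma exists_retraction_of_forall_ne {X F : Type*} [TopologicalSpace X] [NormedAddCommGroup F]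
    [InnerProductSpace ℝ F] (e : X ≃ₜ F) {K A : Set X} (hK : e '' K = closedBall 0 1)
    (hA : e '' A = sphere 0 1) {g : X → X} (hg : ContinuousOn g K) (hgK : MapsTo g K K)
    (hfix : ∀ x ∈ K, g x ≠ x) :
    ∃ r : X → X, ContinuousOn r K ∧ MapsTo r K A ∧ EqOn r id A := by
  have he : MapsTo e K (closedBall 0 1) := hK ▸ mapsTo_image e K
  have he_symm : MapsTo e.symm (closedBall 0 1) K := by
    rw [← hK]; rintro _ ⟨x, hx, rfl⟩; simpa using hx
  obtain ⟨ρ, hρ, hρS, hρ_id⟩ := exists_retraction_closedBall_of_forall_ne (G := e ∘ g ∘ e.symm)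
    (e.continuous.comp_continuousOn (hg.comp e.symm.continuous.continuousOn he_symm))
    (he.comp (hgK.comp he_symm))
    (fun y hy h ↦ hfix _ (he_symm hy) (by simpa using congrArg e.symm h))
  refine ⟨e.symm ∘ ρ ∘ e,
    e.symm.continuous.comp_continuousOn (hρ.comp e.continuous.continuousOn he),
    fun x hx ↦ ?_, fun x hx ↦ ?_⟩
  · obtain ⟨a, ha, hea⟩ : ρ (e x) ∈ e '' A := hA ▸ hρS (he hx)
    simpa [← hea] using ha
  · have : e x ∈ sphere (0 : F) 1 := hA ▸ mem_image_of_mem e hx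
    simp [hρ_id this]

lemma exists_homeomorph_Icc_closedBall (n : ℕ) :
    ∃ e : (Fin n → ℝ) ≃ₜ EuclideanSpace ℝ (Fin n),
      e '' Icc 0 1 = closedBall 0 1 ∧ e '' frontier (Icc 0 1) = sphere 0 1 := by
  let L := (EuclideanSpace.equiv (Fin n) ℝ).symm
  have hc : IsCompact (L '' Icc 0 1) := isCompact_Icc.image L.continuous
  have hint : (interior (L '' Icc 0 1)).Nonempty := by
    change (interior (L.toHomeomorph '' Icc 0 1)).Nonempty
    rw [← L.toHomeomorph.image_interior]
    refine ⟨L (fun _ ↦ 1 / 2), mem_image_of_mem _ ?_⟩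
    rw [← pi_univ_Icc, interior_pi_set finite_univ]
    simp [interior_Icc]
    norm_num
  obtain ⟨h, -, hcl, hfr⟩ := exists_homeomorph_image_interior_closure_frontier_eq_unitBall
    ((convex_Icc 0 1).linear_image L.toLinearMap) hint hc.isBounded
  refine ⟨L.toHomeomorph.trans h, ?_, ?_⟩
  · change (h ∘ L) '' _ = _
    rw [image_comp, ← hcl]
    exact congrArg _ hc.isClosed.closure_eq.symm
  · change (h ∘ L) '' _ = _
    rw [image_comp, ← hfr]
    exact congrArg _ (L.toHomeomorph.image_frontier _)

lemma mem_frontier_Icc_of_apply_eq {ι : Type*} [Finite ι] {a b x : ι → ℝ} (hx : x ∈ Icc a b)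
    {i : ι} (hi : x i = a i ∨ x i = b i) : x ∈ frontier (Icc a b) := by
  refine ⟨subset_closure hx, fun hint ↦ ?_⟩
  rw [← pi_univ_Icc, interior_pi_set finite_univ] at hint
  have hxi : x i ∈ Ioo (a i) (b i) := interior_Icc (a := a i) ▸ hint i (mem_univ i)
  rcases hi with hi | hi <;> simp [hi] at hxi

lemma finite_sphere_inter_setOf_castSucc_eq {m : ℕ} (R : ℝ) (p : Fin m → ℝ) :
    (sphere (0 : EuclideanSpace ℝ (Fin (m + 1))) R ∩ {w | ∀ j, w j.castSucc = p j}).Finite := by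
  set T := sphere (0 : EuclideanSpace ℝ (Fin (m + 1))) R ∩ {w | ∀ j, w j.castSucc = p j}
  set c := R ^ 2 - ∑ j, p j ^ 2
  have hlast : ∀ w ∈ T, w (Fin.last m) ^ 2 = c := by
    rintro w ⟨hw, hwp : ∀ j, w j.castSucc = p j⟩
    have h := EuclideanSpace.real_norm_sq_eq w
    rw [Fin.sum_univ_castSucc, mem_sphere_zero_iff_norm.1 hw] at h
    simp only [hwp] at h
    linarith
  refine Finite.of_finite_image (f := fun w ↦ w (Fin.last m)) ((toFinite {√c, -√c}).subset ?_) ?_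
  · rintro _ ⟨w, hw, rfl⟩
    have h := hlast w hw
    simpa using (abs_eq (Real.sqrt_nonneg c)).1 (by rw [← h, Real.sqrt_sq_eq_abs])
  · rintro w ⟨-, hw⟩ w' ⟨-, hw'⟩ (h : w (Fin.last m) = w' (Fin.last m))
    ext i
    induction i using Fin.lastCases with
    | last => exact h
    | cast j => exact (hw j).trans (hw' j).symm

def LevelSetJoinsOppositeFaces (n : ℕ) : Prop :=
  ∀ f : (Fin n → ℝ) → (Fin (n - 1) → ℝ), ContinuousOn f (Icc 0 1) →
    ∃ (p : Fin (n - 1) → ℝ) (S : Set (Fin n → ℝ)),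
      IsCompact S ∧ IsPreconnected S ∧ S ⊆ Icc 0 1 ∧ (∀ x ∈ S, f x = p) ∧
      ∃ i : Fin n, (∃ x ∈ S, x i = 0) ∧ (∃ x ∈ S, x i = 1)

namespace LevelSetJoinsOppositeFaces

theorem not_injOn_frontier {m : ℕ} (H : LevelSetJoinsOppositeFaces (m + 1))
    {φ : (Fin (m + 1) → ℝ) → EuclideanSpace ℝ (Fin (m + 1))}
    (hφ : ContinuousOn φ (Icc 0 1)) (hφS : MapsTo φ (Icc 0 1) (sphere 0 1)) :
    ¬ InjOn φ (frontier (Icc 0 1)) := by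
  obtain ⟨p, S, -, hS, hSK, hSp, i, ⟨a, haS, ha⟩, ⟨b, hbS, hb⟩⟩ :=
    H (fun x j ↦ φ x j.castSucc) (by fun_prop)
  have hfin : (φ '' S).Finite := (finite_sphere_inter_setOf_castSucc_eq 1 p).subset <| by
    rintro _ ⟨x, hx, rfl⟩
    exact ⟨hφS (hSK hx), fun j ↦ congrFun (hSp x hx) j⟩
  have hsub : (φ '' S).Subsingleton := not_nontrivial_iff.1 fun hnt ↦
    (hS.image φ (hφ.mono hSK)).infinite_of_nontrivial hnt hfin
  intro hinj
  have hab : a = b := hinj (mem_frontier_Icc_of_apply_eq (hSK haS) (Or.inl ha))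
    (mem_frontier_Icc_of_apply_eq (hSK hbS) (Or.inr hb))
    (hsub (mem_image_of_mem φ haS) (mem_image_of_mem φ hbS))
  simp [hab, hb] at ha

theorem not_exists_retraction {m : ℕ} (H : LevelSetJoinsOppositeFaces (m + 1)) :
    ¬ ∃ r : (Fin (m + 1) → ℝ) → (Fin (m + 1) → ℝ), ContinuousOn r (Icc 0 1) ∧
      MapsTo r (Icc 0 1) (frontier (Icc 0 1)) ∧ EqOn r id (frontier (Icc 0 1)) := by
  rintro ⟨r, hr, hrK, hr_id⟩
  obtain ⟨e, -, he⟩ := exists_homeomorph_Icc_closedBall (m + 1)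
  refine H.not_injOn_frontier (φ := e ∘ r) (e.continuous.comp_continuousOn hr)
    (fun x hx ↦ he ▸ mem_image_of_mem e (hrK hx)) ?_
  exact e.injective.injOn.congr fun x hx ↦ by simp [hr_id hx]

end LevelSetJoinsOppositeFaces

theorem no_retraction_and_fixed_point (n : ℕ) (hn : 1 ≤ n)
    (H : ∀ f : (Fin n → ℝ) → (Fin (n - 1) → ℝ),
      ContinuousOn f (Set.Icc (0 : Fin n → ℝ) 1) →
      ∃ (p : Fin (n - 1) → ℝ) (S : Set (Fin n → ℝ)),
        IsCompact S ∧ IsPreconnected S ∧ S ⊆ Set.Icc (0 : Fin n → ℝ) 1 ∧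
        (∀ x ∈ S, f x = p) ∧
        ∃ i : Fin n, (∃ x ∈ S, x i = 0) ∧ (∃ x ∈ S, x i = 1)) :
    (¬ ∃ r : (Fin n → ℝ) → (Fin n → ℝ),
        ContinuousOn r (Set.Icc (0 : Fin n → ℝ) 1) ∧
        (∀ x ∈ Set.Icc (0 : Fin n → ℝ) 1, r x ∈ frontier (Set.Icc (0 : Fin n → ℝ) 1)) ∧
        (∀ x ∈ frontier (Set.Icc (0 : Fin n → ℝ) 1), r x = x)) ∧
    (∀ g : (Fin n → ℝ) → (Fin n → ℝ),
        ContinuousOn g (Set.Icc (0 : Fin n → ℝ) 1) →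
        (∀ x ∈ Set.Icc (0 : Fin n → ℝ) 1, g x ∈ Set.Icc (0 : Fin n → ℝ) 1) →
        ∃ x ∈ Set.Icc (0 : Fin n → ℝ) 1, g x = x) := by
  obtain ⟨m, rfl⟩ := Nat.exists_eq_add_of_le' hn
  have no_retraction := LevelSetJoinsOppositeFaces.not_exists_retraction H
  refine ⟨no_retraction, fun g hg hgK ↦ ?_⟩
  by_contra! hfix
  obtain ⟨e, heK, he⟩ := exists_homeomorph_Icc_closedBall (m + 1)
  exact no_retraction (exists_retraction_of_forall_ne e heK he hg hgK hfix)
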